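/- arXiv:1603.00562 — 7 statements merged into one kernel-verified Lean document; each statement's English description precedes it below -/
import Mathlib

section
/- Let f be a density on [0,b] with CDF F and suppose a bidder's interim allocation q : [0,b] → [0,1] (for n i.i.d. symmetric bidders) satisfies Border's condition: for every measurable S ⊆ [0,b], ∫_S q(t) f(t) dt ≤ (1 − (1 − ∫_S f(t) dt)^n)/n. Then for every bounded measurable virtual value function x : [0,b] → [0, v̄], ∫₀^b q(t) f(t) x(t) dt ≤ ∫₀^{v̄} [1 − (1 − ∫_{\{t : x(t) ≥ v\}} f(t) dt)^n]/n dv. -/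
/-!
Layer cake: writing `x t = ∫ v in [0, v̄], 1[v ≤ x t]` and applying Fubini turns `∫ q f x` into
`∫ v in [0, v̄], ∫_{x ≥ v} q f`, and Border's condition bounds the inner integral for every `v`.
The bound is antitone in `v` (the superlevel sets shrink), hence integrable on `[0, v̄]`.
-/

open Set MeasureTheory

theorem integral_mul_eq_integral_setIntegral_le {α : Type*} [MeasurableSpace α] {μ : Measure α}
    [SFinite μ] {g x : α → ℝ} {c : ℝ} (hg : Integrable g μ)
    (hx : Measurable x) (hx_mem : ∀ᵐ t ∂μ, x t ∈ Icc 0 c) :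
    ∫ t, g t * x t ∂μ = ∫ v in Icc 0 c, ∫ t in {t | v ≤ x t}, g t ∂μ := by
  set F : α → ℝ → ℝ := fun t v => (Iic (x t)).indicator (fun _ => g t) v
  have hF : Integrable (Function.uncurry F) (μ.prod (volume.restrict (Icc 0 c))) :=
    (hg.comp_fst _).indicator (measurableSet_le measurable_snd (hx.comp measurable_fst))
  have h_inner_v : (fun t => ∫ v in Icc 0 c, F t v) =ᵐ[μ] fun t => g t * x t := by
    filter_upwards [hx_mem] with t ⟨hx0, hxc⟩
    have hIcc : Icc 0 c ∩ Iic (x t) = Icc 0 (x t) :=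
      Subset.antisymm (fun v hv => ⟨hv.1.1, hv.2⟩) fun v hv => ⟨⟨hv.1, hv.2.trans hxc⟩, hv.2⟩
    rw [setIntegral_indicator measurableSet_Iic, hIcc, setIntegral_const,
      Real.volume_real_Icc_of_le hx0, sub_zero, smul_eq_mul, mul_comm]
  have h_inner_t : ∀ v, ∫ t, F t v ∂μ = ∫ t in {t | v ≤ x t}, g t ∂μ := fun v =>
    integral_indicator (measurableSet_le measurable_const hx)
  rw [← integral_congr_ae h_inner_v, integral_integral_swap hF]
  simp only [h_inner_t]

theorem antitone_setIntegral_superlevel {α : Type*} [MeasurableSpace α] {μ : Measure α}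
    {f x : α → ℝ} {s : Set α} (hs : MeasurableSet s) (hx : Measurable x)
    (hf : IntegrableOn f s μ) (hf_nonneg : ∀ t ∈ s, 0 ≤ f t) :
    Antitone fun v => ∫ t in {t ∈ s | v ≤ x t}, f t ∂μ := by
  intro v w hvw
  refine setIntegral_mono_set (hf.mono_set fun t ht => ht.1) ?_
    (Filter.Eventually.of_forall fun t ht => ⟨ht.1, hvw.trans ht.2⟩)
  exact ae_restrict_of_forall_mem (hs.inter (measurableSet_le measurable_const hx))
    fun t ht => hf_nonneg t ht.1

theorem Antitone.one_sub_one_sub_pow_div {φ : ℝ → ℝ} (hφ : Antitone φ) (hφ_le : ∀ v, φ v ≤ 1)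
    (n : ℕ) : Antitone fun v => (1 - (1 - φ v) ^ n) / n := by
  intro v w hvw
  have : (1 - φ v) ^ n ≤ (1 - φ w) ^ n :=
    pow_le_pow_left₀ (sub_nonneg.2 (hφ_le v)) (by linarith [hφ hvw]) n
  exact div_le_div_of_nonneg_right (by linarith) n.cast_nonneg

theorem generalized_border_general
    (n : ℕ) (b vbar : ℝ)
    (f q x : ℝ → ℝ)
    (hf_nonneg : ∀ t ∈ Icc (0:ℝ) b, 0 ≤ f t)
    (hf_int : IntegrableOn f (Icc 0 b))
    (hf_total : (∫ t in Icc (0:ℝ) b, f t) = 1)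
    (hq_mem : ∀ t ∈ Icc (0:ℝ) b, q t ∈ Icc (0:ℝ) 1)
    (hq_meas : Measurable q)
    (hx_meas : Measurable x)
    (hx_mem : ∀ t ∈ Icc (0:ℝ) b, x t ∈ Icc (0:ℝ) vbar)
    (hborder : ∀ S : Set ℝ, MeasurableSet S → S ⊆ Icc 0 b →
      (∫ t in S, q t * f t) ≤ (1 - (1 - ∫ t in S, f t) ^ n) / n) :
    (∫ t in Icc (0:ℝ) b, q t * f t * x t) ≤
      ∫ v in Icc (0:ℝ) vbar,
        (1 - (1 - ∫ t in {t ∈ Icc (0:ℝ) b | v ≤ x t}, f t) ^ n) / n := by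
  set S : ℝ → Set ℝ := fun v => {t ∈ Icc (0:ℝ) b | v ≤ x t}
  have hS : ∀ v, MeasurableSet (S v) := fun v =>
    measurableSet_Icc.inter (measurableSet_le measurable_const hx_meas)
  have hqf : IntegrableOn (fun t => q t * f t) (Icc 0 b) :=
    hf_int.bdd_mul hq_meas.aestronglyMeasurable <|
      ae_restrict_of_forall_mem measurableSet_Icc fun t ht => by
        rw [Real.norm_eq_abs, abs_le]; exact ⟨by linarith [(hq_mem t ht).1], (hq_mem t ht).2⟩
  have hF_anti : Antitone fun v => ∫ t in S v, f t :=
    antitone_setIntegral_superlevel measurableSet_Icc hx_meas hf_int hf_nonneg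
  have hF_le_one : ∀ v, ∫ t in S v, f t ≤ 1 := fun v => hf_total ▸
    setIntegral_mono_set hf_int (ae_restrict_of_forall_mem measurableSet_Icc hf_nonneg)
      (Filter.Eventually.of_forall fun t ht => ht.1)
  calc ∫ t in Icc 0 b, q t * f t * x t = ∫ v in Icc 0 vbar, ∫ t in S v, q t * f t := by
        rw [integral_mul_eq_integral_setIntegral_le hqf hx_meas
          (ae_restrict_of_forall_mem measurableSet_Icc hx_mem)]
        simp_rw [Measure.restrict_restrict (measurableSet_le measurable_const hx_meas), inter_comm]
        rfl
    _ ≤ _ := integral_mono_of_nonneg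
        (Filter.Eventually.of_forall fun v => setIntegral_nonneg (hS v) fun t ht =>
          mul_nonneg (hq_mem t ht.1).1 (hf_nonneg t ht.1))
        ((hF_anti.one_sub_one_sub_pow_div hF_le_one n).antitoneOn _ |>.integrableOn_isCompact
          isCompact_Icc)
        (Filter.Eventually.of_forall fun v => hborder (S v) (hS v) (sep_subset _ _))

/-- Generalized Border inequality: if the interim allocation `q` satisfies Border's
condition for every measurable set, then for every bounded measurable virtual value
function `x : [0,b] → [0, v̄]`,
`∫₀^b q f x ≤ ∫₀^{v̄} (1 − (1 − ∫_{x ≥ v} f)^n)/n dv`. -/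
theorem generalized_border
    (n : ℕ) (hn : 1 ≤ n) (b vbar : ℝ) (hb : 0 < b) (hvbar : 0 ≤ vbar)
    (f q x : ℝ → ℝ)
    (hf_nonneg : ∀ t ∈ Icc (0:ℝ) b, 0 ≤ f t)
    (hf_int : IntegrableOn f (Icc 0 b))
    (hf_total : (∫ t in Icc (0:ℝ) b, f t) = 1)
    (hq_mem : ∀ t ∈ Icc (0:ℝ) b, q t ∈ Icc (0:ℝ) 1)
    (hq_meas : Measurable q)
    (hx_meas : Measurable x)
    (hx_mem : ∀ t ∈ Icc (0:ℝ) b, x t ∈ Icc (0:ℝ) vbar)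
    (hborder : ∀ S : Set ℝ, MeasurableSet S → S ⊆ Icc 0 b →
      (∫ t in S, q t * f t) ≤ (1 - (1 - ∫ t in S, f t) ^ n) / n) :
    (∫ t in Icc (0:ℝ) b, q t * f t * x t) ≤
      ∫ v in Icc (0:ℝ) vbar,
        (1 - (1 - ∫ t in {t ∈ Icc (0:ℝ) b | v ≤ x t}, f t) ^ n) / n :=
  generalized_border_general n b vbar f q x hf_nonneg hf_int hf_total hq_mem hq_meas hx_meas hx_mem
    hborder
end

section
/- Let 0 ≤ w ≤ 1, c > 0, d > 0 with w + d ≤ 1 and c ≤ w, and let n ≥ 1 be a natural number. If A ≥ ((1 − w + c)^n − (1 − w)^n)/n and B ≤ ((1 − w)^n − (1 − w − d)^n)/n, then A/c ≥ B/d. -/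
/-- Key algebraic inequality: for `0 ≤ w ≤ 1`, `c, d > 0` with `w + d ≤ 1`, `c ≤ w`
and `n ≥ 1`, if `A ≥ ((1−w+c)^n − (1−w)^n)/n` and `B ≤ ((1−w)^n − (1−w−d)^n)/n`,
then `A/c ≥ B/d`. -/
theorem border_average_inequality
    (n : ℕ) (hn : 1 ≤ n) (w c d A B : ℝ)
    (hw0 : 0 ≤ w) (hw1 : w ≤ 1) (hc : 0 < c) (hd : 0 < d)
    (hwd : w + d ≤ 1) (hcw : c ≤ w)
    (hA : ((1 - w + c) ^ n - (1 - w) ^ n) / n ≤ A)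
    (hB : B ≤ ((1 - w) ^ n - (1 - w - d) ^ n) / n) :
    B / d ≤ A / c := by
  have hn' : (0:ℝ) < n := by exact_mod_cast Nat.lt_of_lt_of_le Nat.zero_lt_one hn
  set x := 1 - w + c with hx
  set y := 1 - w with hy
  set z := 1 - w - d with hz
  have hz0 : 0 ≤ z := by simp only [hz]; linarith
  have hzy : z ≤ y := by simp only [hz, hy]; linarith
  have hyx : y ≤ x := by simp only [hx, hy]; linarith
  have hy0 : 0 ≤ y := le_trans hz0 hzy
  have h1 : (∑ i ∈ Finset.range n, x ^ i * y ^ (n - 1 - i)) * c = x ^ n - y ^ n := by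
    have := geom_sum₂_mul x y n
    rw [show x - y = c by ring] at this
    exact this
  have h2 : (∑ i ∈ Finset.range n, y ^ i * z ^ (n - 1 - i)) * d = y ^ n - z ^ n := by
    have := geom_sum₂_mul y z n
    rw [show y - z = d by ring] at this
    exact this
  have hsum : (∑ i ∈ Finset.range n, y ^ i * z ^ (n - 1 - i))
      ≤ ∑ i ∈ Finset.range n, x ^ i * y ^ (n - 1 - i) := by
    apply Finset.sum_le_sum
    intro i _
    exact mul_le_mul (pow_le_pow_left₀ hy0 hyx i) (pow_le_pow_left₀ hz0 hzy _)
      (pow_nonneg hz0 _) (pow_nonneg (le_trans hy0 hyx) _)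
  have hBn : B * n ≤ y ^ n - z ^ n := (le_div_iff₀ hn').mp hB
  have hAn : x ^ n - y ^ n ≤ A * n := (div_le_iff₀ hn').mp hA
  rw [div_le_div_iff₀ hd hc]
  nlinarith [mul_le_mul_of_nonneg_right hsum (le_of_lt (mul_pos hc hd)),
    mul_pos hc hd]
end

section
/- Suppose q : [0,b] → ℝ≥0 achieves Border's bound with equality at every level set of a virtual value function x, i.e., for all v, ∫_{\{x(t) ≥ v\}} q(t) f(t) dt = (1 − (1 − ∫_{\{x(t) ≥ v\}} f(t) dt)^n)/n, and q satisfies Border's inequality for all measurable sets. Then for any measurable sets C, D of positive f-measure with min_{t∈C} x(t) > max_{t∈D} x(t), the average allocation on C is at least the average allocation on D: (∫_C q f)/(∫_C f) ≥ (∫_D q f)/(∫_D f). -/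
/-!
Let `W` be the upper level set of `x` at `v = sup_D x`, strict if the supremum is attained and
weak otherwise, so that `C ⊆ W` and `W ∩ D = ∅`. Border's bound holds with equality on `W`: by
hypothesis for a weak level set, by monotone convergence from the weak ones for a strict one.
With `w, c, d` the `f`-masses of `W, C, D` and `B s = (1 - (1 - s)^n)/n`, equality on `W` and
Border's inequality on `W \ C` and `W ∪ D` give
`∫_C q f ≥ B w - B (w - c)` and `∫_D q f ≤ B (w + d) - B w`.
Since `B` is concave on `s ≤ 1`, the secant slope over `[w - c, w]` dominates the one over
`[w, w + d]`, which compares the two averages.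
-/

open Set MeasureTheory Filter

noncomputable def borderBound (n : ℕ) (s : ℝ) : ℝ := (1 - (1 - s) ^ n) / n

lemma continuous_borderBound (n : ℕ) : Continuous (borderBound n) := by
  unfold borderBound
  fun_prop

lemma borderBound_pos {n : ℕ} {s : ℝ} (hn : n ≠ 0) (hs₀ : 0 < s) (hs₁ : s ≤ 1) :
    0 < borderBound n s := by
  have : (1 - s) ^ n < 1 := pow_lt_one₀ (by linarith) (by linarith) hn
  unfold borderBound
  exact div_pos (by linarith) (by exact_mod_cast Nat.pos_of_ne_zero hn)

lemma borderBound_slope_anti (n : ℕ) {w c d : ℝ} (hc : 0 < c) (hd : 0 < d) (hwd : w + d ≤ 1) :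
    (borderBound n (w + d) - borderBound n w) / d ≤
      (borderBound n w - borderBound n (w - c)) / c := by
  have h := (convexOn_pow n).slope_mono_adjacent (x := 1 - w - d) (y := 1 - w) (z := 1 - w + c)
    (mem_Ici.2 (by linarith)) (mem_Ici.2 (by linarith)) (by linarith) (by linarith)
  unfold borderBound
  calc _ = ((1 - w) ^ n - (1 - w - d) ^ n) / (1 - w - (1 - w - d)) / n := by ring
    _ ≤ ((1 - w + c) ^ n - (1 - w) ^ n) / (1 - w + c - (1 - w)) / n := by gcongr
    _ = _ := by ring

section Levels

variable {α : Type*} (Ω : Set α) (x : α → ℝ) (v : ℝ)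

lemma iUnion_setOf_add_one_div_le :
    ⋃ k : ℕ, {t ∈ Ω | v + 1 / ((k : ℝ) + 1) ≤ x t} = {t ∈ Ω | v < x t} := by
  ext t
  simp only [mem_iUnion, mem_ofPred_eq]
  constructor
  · rintro ⟨k, htΩ, hk⟩
    exact ⟨htΩ, lt_of_lt_of_le (lt_add_of_pos_right v Nat.one_div_pos_of_nat) hk⟩
  · rintro ⟨htΩ, hvt⟩
    obtain ⟨k, hk⟩ := exists_nat_one_div_lt (sub_pos.2 hvt)
    exact ⟨k, htΩ, by linarith⟩

lemma monotone_setOf_add_one_div_le :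
    Monotone fun k : ℕ => {t ∈ Ω | v + 1 / ((k : ℝ) + 1) ≤ x t} := by
  intro k m hkm t ⟨htΩ, hk⟩
  refine ⟨htΩ, le_trans (add_le_add_right ?_ v) hk⟩
  gcongr

lemma exists_levelSet_separating {C D : Set α} (hC : C.Nonempty) (hD : D.Nonempty)
    (hCD : ∀ t ∈ C, ∀ s ∈ D, x s < x t) :
    ∃ v : ℝ, ((∀ t ∈ C, v ≤ x t) ∧ ∀ s ∈ D, x s < v) ∨
      ((∀ t ∈ C, v < x t) ∧ ∀ s ∈ D, x s ≤ v) := by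
  obtain ⟨t₀, ht₀⟩ := hC
  have hbdd : BddAbove (x '' D) := ⟨x t₀, by rintro _ ⟨s, hs, rfl⟩; exact (hCD t₀ ht₀ s hs).le⟩
  have hDv : ∀ s ∈ D, x s ≤ sSup (x '' D) := fun s hs => le_csSup hbdd ⟨s, hs, rfl⟩
  refine ⟨sSup (x '' D), ?_⟩
  by_cases hmax : sSup (x '' D) ∈ x '' D
  · obtain ⟨s₁, hs₁, hx₁⟩ := hmax
    exact Or.inr ⟨fun t ht => hx₁ ▸ hCD t ht s₁ hs₁, hDv⟩
  · refine Or.inl ⟨fun t ht => csSup_le (hD.image x) ?_, fun s hs => (hDv s hs).lt_of_ne ?_⟩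
    · rintro _ ⟨s, hs, rfl⟩
      exact (hCD t ht s hs).le
    · exact fun hs' => hmax ⟨s, hs, hs'⟩

end Levels

section Measure

variable {α : Type*} [MeasurableSpace α] {μ : Measure α}

lemma nonempty_of_setIntegral_ne_zero {g : α → ℝ} {S : Set α} (h : ∫ t in S, g t ∂μ ≠ 0) :
    S.Nonempty :=
  let ⟨t, ht, _⟩ := exists_ne_zero_of_setIntegral_ne_zero h
  ⟨t, ht⟩

lemma setIntegral_iUnion_eq_comp_of_monotone {g h : α → ℝ} {Φ : ℝ → ℝ} (hΦ : Continuous Φ)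
    {S : ℕ → Set α} (hS : ∀ k, MeasurableSet (S k)) (hmono : Monotone S)
    (hg : IntegrableOn g (⋃ k, S k) μ) (hh : IntegrableOn h (⋃ k, S k) μ)
    (hgh : ∀ k, ∫ t in S k, g t ∂μ = Φ (∫ t in S k, h t ∂μ)) :
    ∫ t in ⋃ k, S k, g t ∂μ = Φ (∫ t in ⋃ k, S k, h t ∂μ) :=
  tendsto_nhds_unique (tendsto_setIntegral_of_monotone hS hmono hg) <|
    ((hΦ.tendsto _).comp (tendsto_setIntegral_of_monotone hS hmono hh)).congr fun k => (hgh k).symm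

variable {n : ℕ} {f q : α → ℝ}

lemma integrableOn_of_setIntegral_eq_borderBound {g : α → ℝ} {S : Set α} (hn : n ≠ 0)
    (hpos : 0 < ∫ t in S, f t ∂μ) (hle : ∫ t in S, f t ∂μ ≤ 1)
    (h : ∫ t in S, g t ∂μ = borderBound n (∫ t in S, f t ∂μ)) : IntegrableOn g S μ :=
  Integrable.of_integral_ne_zero (h ▸ (borderBound_pos hn hpos hle).ne')

lemma setIntegral_strictLevelSet_eq_borderBound {Ω : Set α} {x : α → ℝ} (hΩ : MeasurableSet Ω)
    (hx : Measurable x) (hf : IntegrableOn f Ω μ) (v : ℝ)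
    (hqf : IntegrableOn (fun t => q t * f t) {t ∈ Ω | v < x t} μ)
    (heq : ∀ v : ℝ, ∫ t in {t ∈ Ω | v ≤ x t}, q t * f t ∂μ =
      borderBound n (∫ t in {t ∈ Ω | v ≤ x t}, f t ∂μ)) :
    ∫ t in {t ∈ Ω | v < x t}, q t * f t ∂μ = borderBound n (∫ t in {t ∈ Ω | v < x t}, f t ∂μ) := by
  rw [← iUnion_setOf_add_one_div_le] at hqf ⊢
  exact setIntegral_iUnion_eq_comp_of_monotone (continuous_borderBound n)
    (fun k => hΩ.inter (measurableSet_le measurable_const hx))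
    (monotone_setOf_add_one_div_le Ω x v) hqf
    (hf.mono_set (iUnion_subset fun k => sep_subset Ω _)) (fun k => heq _)

lemma borderBound_sub_le_setIntegral_of_subset {C W : Set α} (hC : MeasurableSet C)
    (hCW : C ⊆ W) (hf : IntegrableOn f W μ) (hqf : IntegrableOn (fun t => q t * f t) W μ)
    (hW : ∫ t in W, q t * f t ∂μ = borderBound n (∫ t in W, f t ∂μ))
    (hWC : ∫ t in W \ C, q t * f t ∂μ ≤ borderBound n (∫ t in W \ C, f t ∂μ)) :
    borderBound n (∫ t in W, f t ∂μ) - borderBound n (∫ t in W, f t ∂μ - ∫ t in C, f t ∂μ) ≤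
      ∫ t in C, q t * f t ∂μ := by
  rw [setIntegral_sdiff hC hqf hCW, setIntegral_sdiff hC hf hCW] at hWC
  linarith

lemma setIntegral_le_borderBound_sub_of_disjoint {D W : Set α} (hD : MeasurableSet D)
    (hWD : Disjoint W D) (hfW : IntegrableOn f W μ) (hfD : IntegrableOn f D μ)
    (hqfW : IntegrableOn (fun t => q t * f t) W μ) (hqfD : IntegrableOn (fun t => q t * f t) D μ)
    (hW : ∫ t in W, q t * f t ∂μ = borderBound n (∫ t in W, f t ∂μ))
    (hWD' : ∫ t in W ∪ D, q t * f t ∂μ ≤ borderBound n (∫ t in W ∪ D, f t ∂μ)) :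
    ∫ t in D, q t * f t ∂μ ≤
      borderBound n (∫ t in W, f t ∂μ + ∫ t in D, f t ∂μ) - borderBound n (∫ t in W, f t ∂μ) := by
  rw [setIntegral_union hWD hD hqfW hqfD, setIntegral_union hWD hD hfW hfD] at hWD'
  linarith

variable {Ω C D W : Set α}

lemma setIntegral_le_one_of_subset (hΩ : MeasurableSet Ω) (hf : ∀ t ∈ Ω, 0 ≤ f t)
    (hfi : IntegrableOn f Ω μ) (hΩ₁ : ∫ t in Ω, f t ∂μ ≤ 1) {S : Set α} (hS : S ⊆ Ω) :
    ∫ t in S, f t ∂μ ≤ 1 :=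
  (setIntegral_mono_set hfi (ae_restrict_of_forall_mem hΩ hf) hS.eventuallyLE).trans hΩ₁

lemma div_setIntegral_le_of_borderBound_eq_of_subset_of_disjoint (hn : n ≠ 0)
    (hΩ : MeasurableSet Ω) (hf : ∀ t ∈ Ω, 0 ≤ f t) (hfi : IntegrableOn f Ω μ)
    (hΩ₁ : ∫ t in Ω, f t ∂μ ≤ 1) (hq : ∀ t ∈ C, 0 ≤ q t)
    (hborder : ∀ S : Set α, MeasurableSet S → S ⊆ Ω →
      ∫ t in S, q t * f t ∂μ ≤ borderBound n (∫ t in S, f t ∂μ))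
    (hW : MeasurableSet W) (hWΩ : W ⊆ Ω)
    (htight : ∫ t in W, q t * f t ∂μ = borderBound n (∫ t in W, f t ∂μ))
    (hC : MeasurableSet C) (hCW : C ⊆ W) (hD : MeasurableSet D) (hDΩ : D ⊆ Ω)
    (hWD : Disjoint W D) (hC_pos : 0 < ∫ t in C, f t ∂μ) (hD_pos : 0 < ∫ t in D, f t ∂μ) :
    (∫ t in D, q t * f t ∂μ) / (∫ t in D, f t ∂μ) ≤
      (∫ t in C, q t * f t ∂μ) / (∫ t in C, f t ∂μ) := by
  have hfW := hfi.mono_set hWΩ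
  have hfD := hfi.mono_set hDΩ
  have hW_pos : 0 < ∫ t in W, f t ∂μ := hC_pos.trans_le <| setIntegral_mono_set hfW
    (ae_restrict_of_forall_mem hW fun t ht => hf t (hWΩ ht)) hCW.eventuallyLE
  have hqfW := integrableOn_of_setIntegral_eq_borderBound hn hW_pos
    (setIntegral_le_one_of_subset hΩ hf hfi hΩ₁ hWΩ) htight
  have hWD₁ : ∫ t in W, f t ∂μ + ∫ t in D, f t ∂μ ≤ 1 := by
    rw [← setIntegral_union hWD hD hfW hfD]
    exact setIntegral_le_one_of_subset hΩ hf hfi hΩ₁ (union_subset hWΩ hDΩ)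
  by_cases hqfD : IntegrableOn (fun t => q t * f t) D μ
  · have hupper := setIntegral_le_borderBound_sub_of_disjoint hD hWD hfW hfD hqfW hqfD htight
      (hborder _ (hW.union hD) (union_subset hWΩ hDΩ))
    have hlower := borderBound_sub_le_setIntegral_of_subset hC hCW hfW hqfW htight
      (hborder _ (hW.diff hC) (sdiff_subset.trans hWΩ))
    calc _ ≤ (borderBound n (∫ t in W, f t ∂μ + ∫ t in D, f t ∂μ) -
          borderBound n (∫ t in W, f t ∂μ)) / ∫ t in D, f t ∂μ := by gcongr
      _ ≤ (borderBound n (∫ t in W, f t ∂μ) -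
          borderBound n (∫ t in W, f t ∂μ - ∫ t in C, f t ∂μ)) / ∫ t in C, f t ∂μ :=
        borderBound_slope_anti n hC_pos hD_pos hWD₁
      _ ≤ _ := by gcongr
  · rw [integral_undef hqfD, zero_div]
    exact div_nonneg (setIntegral_nonneg hC fun t ht =>
      mul_nonneg (hq t ht) (hf t (hWΩ (hCW ht)))) hC_pos.le

lemma exists_superset_disjoint_borderBound_eq {x : α → ℝ} (hn : n ≠ 0) (hΩ : MeasurableSet Ω)
    (hf : ∀ t ∈ Ω, 0 ≤ f t) (hfi : IntegrableOn f Ω μ) (hΩ₁ : ∫ t in Ω, f t ∂μ ≤ 1)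
    (hx : Measurable x)
    (heq : ∀ v : ℝ, ∫ t in {t ∈ Ω | v ≤ x t}, q t * f t ∂μ =
      borderBound n (∫ t in {t ∈ Ω | v ≤ x t}, f t ∂μ))
    (hCΩ : C ⊆ Ω) (hC_pos : 0 < ∫ t in C, f t ∂μ) (hD : D.Nonempty)
    (hCD : ∀ t ∈ C, ∀ s ∈ D, x s < x t) :
    ∃ W : Set α, MeasurableSet W ∧ W ⊆ Ω ∧ C ⊆ W ∧ Disjoint W D ∧
      ∫ t in W, q t * f t ∂μ = borderBound n (∫ t in W, f t ∂μ) := by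
  obtain ⟨v, ⟨hCv, hDv⟩ | ⟨hCv, hDv⟩⟩ :=
    exists_levelSet_separating x (nonempty_of_setIntegral_ne_zero hC_pos.ne') hD hCD
  · exact ⟨_, hΩ.inter (measurableSet_le measurable_const hx), sep_subset Ω _,
      fun t ht => ⟨hCΩ ht, hCv t ht⟩,
      disjoint_left.2 fun s hs hsD => (hDv s hsD).not_ge hs.2, heq v⟩
  · have hweak : MeasurableSet {t ∈ Ω | v ≤ x t} := hΩ.inter (measurableSet_le measurable_const hx)
    have hC_weak : C ⊆ {t ∈ Ω | v ≤ x t} := fun t ht => ⟨hCΩ ht, (hCv t ht).le⟩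
    have hweak_pos : 0 < ∫ t in {t ∈ Ω | v ≤ x t}, f t ∂μ := hC_pos.trans_le <|
      setIntegral_mono_set (hfi.mono_set (sep_subset Ω _))
        (ae_restrict_of_forall_mem hweak fun t ht => hf t ht.1) hC_weak.eventuallyLE
    have hqf := integrableOn_of_setIntegral_eq_borderBound hn hweak_pos
      (setIntegral_le_one_of_subset hΩ hf hfi hΩ₁ (sep_subset Ω _)) (heq v)
    exact ⟨_, hΩ.inter (measurableSet_lt measurable_const hx), sep_subset Ω _,
      fun t ht => ⟨hCΩ ht, hCv t ht⟩,
      disjoint_left.2 fun s hs hsD => (hDv s hsD).not_gt hs.2,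
      setIntegral_strictLevelSet_eq_borderBound hΩ hx hfi v
        (hqf.mono_set fun t ht => ⟨ht.1, ht.2.le⟩) heq⟩

end Measure

theorem border_equality_implies_monotone_general
    (n : ℕ) (hn : 1 ≤ n) (b : ℝ)
    (f q x : ℝ → ℝ)
    (hf_nonneg : ∀ t ∈ Icc (0:ℝ) b, 0 ≤ f t)
    (hf_int : IntegrableOn f (Icc 0 b))
    (hf_total : (∫ t in Icc (0:ℝ) b, f t) = 1)
    (hq_nonneg : ∀ t ∈ Icc (0:ℝ) b, 0 ≤ q t)
    (hx_meas : Measurable x)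
    (hborder : ∀ S : Set ℝ, MeasurableSet S → S ⊆ Icc 0 b →
      (∫ t in S, q t * f t) ≤ (1 - (1 - ∫ t in S, f t) ^ n) / n)
    (heq : ∀ v : ℝ,
      (∫ t in {t ∈ Icc (0:ℝ) b | v ≤ x t}, q t * f t) =
        (1 - (1 - ∫ t in {t ∈ Icc (0:ℝ) b | v ≤ x t}, f t) ^ n) / n)
    (C D : Set ℝ) (hC_meas : MeasurableSet C) (hD_meas : MeasurableSet D)
    (hC_sub : C ⊆ Icc 0 b) (hD_sub : D ⊆ Icc 0 b)
    (hC_pos : 0 < ∫ t in C, f t) (hD_pos : 0 < ∫ t in D, f t)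
    (hCD : ∀ t ∈ C, ∀ s ∈ D, x s < x t) :
    (∫ t in D, q t * f t) / (∫ t in D, f t) ≤
      (∫ t in C, q t * f t) / (∫ t in C, f t) := by
  have hn₀ : n ≠ 0 := by omega
  obtain ⟨W, hW, hWΩ, hCW, hWD, htight⟩ :=
    exists_superset_disjoint_borderBound_eq hn₀ measurableSet_Icc hf_nonneg hf_int hf_total.le
      hx_meas heq hC_sub hC_pos (nonempty_of_setIntegral_ne_zero hD_pos.ne') hCD
  exact div_setIntegral_le_of_borderBound_eq_of_subset_of_disjoint hn₀ measurableSet_Icc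
    hf_nonneg hf_int hf_total.le (fun t ht => hq_nonneg t (hC_sub ht)) hborder hW hWΩ htight
    hC_meas hCW hD_meas hD_sub hWD hC_pos hD_pos

/-- Monotonicity of the optimal Border-feasible allocation: if `q` achieves Border's
bound with equality on every upper level set of the virtual value `x`, and satisfies
Border's inequality on all measurable sets, then for measurable sets `C, D` of positive
`f`-measure on which `x` is respectively everywhere higher / lower, the average
allocation on `C` is at least the average allocation on `D`. -/
theorem border_equality_implies_monotone
    (n : ℕ) (hn : 1 ≤ n) (b : ℝ) (hb : 0 < b)
    (f q x : ℝ → ℝ)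
    (hf_nonneg : ∀ t ∈ Icc (0:ℝ) b, 0 ≤ f t)
    (hf_int : IntegrableOn f (Icc 0 b))
    (hf_total : (∫ t in Icc (0:ℝ) b, f t) = 1)
    (hq_nonneg : ∀ t ∈ Icc (0:ℝ) b, 0 ≤ q t)
    (hq_meas : Measurable q) (hx_meas : Measurable x)
    (hborder : ∀ S : Set ℝ, MeasurableSet S → S ⊆ Icc 0 b →
      (∫ t in S, q t * f t) ≤ (1 - (1 - ∫ t in S, f t) ^ n) / n)
    (heq : ∀ v : ℝ,
      (∫ t in {t ∈ Icc (0:ℝ) b | v ≤ x t}, q t * f t) =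
        (1 - (1 - ∫ t in {t ∈ Icc (0:ℝ) b | v ≤ x t}, f t) ^ n) / n)
    (C D : Set ℝ) (hC_meas : MeasurableSet C) (hD_meas : MeasurableSet D)
    (hC_sub : C ⊆ Icc 0 b) (hD_sub : D ⊆ Icc 0 b)
    (hC_pos : 0 < ∫ t in C, f t) (hD_pos : 0 < ∫ t in D, f t)
    (hCD : ∀ t ∈ C, ∀ s ∈ D, x s < x t) :
    (∫ t in D, q t * f t) / (∫ t in D, f t) ≤
      (∫ t in C, q t * f t) / (∫ t in C, f t) :=
  border_equality_implies_monotone_general n hn b f q x hf_nonneg hf_int hf_total hq_nonneg hx_meas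
    hborder heq C D hC_meas hD_meas hC_sub hD_sub hC_pos hD_pos hCD
end

section
/- Consider two bidders with types in [0,1], two items, and valuations (t_i, 1 − t_i). Suppose a mechanism (q¹_i, q²_i, pay_i) is dominant-strategy incentive compatible and ex post individually rational, and suppose bidder 1's ex post utility satisfies u₁(1/2, t₂) = 0 for all t₂ and the allocation against t₂ = 0 satisfies q¹₁(t₁, 0) = 1 and q²₁(t₁, 0) = 0 for all t₁ ∈ (0,1]. Then a contradiction follows: DIC forces u₁(t₁, 0) = t₁ − 1/2 for t₁ ∈ (0,1], which is negative for t₁ < 1/2, violating ex post IR. -/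
open Set

/-- No DIC and ex post IR mechanism can have `u₁(1/2, t₂) = 0` for all `t₂` while
allocating both items to bidder 1 whenever `t₂ = 0` and `t₁ ∈ (0,1]`: DIC forces
`u₁(t₁, 0) = t₁ − 1/2`, which is negative for `t₁ < 1/2`, violating ex post IR. -/
theorem no_DIC_expost_IR
    (q1 q2 pay : ℝ → ℝ → ℝ)
    -- ex post utility of bidder 1
    (u : ℝ → ℝ → ℝ)
    (hu : ∀ t1 t2, u t1 t2 = q1 t1 t2 * t1 + q2 t1 t2 * (1 - t1) - pay t1 t2)
    -- allocation probabilities are in [0,1]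
    (hq : ∀ t1 ∈ Icc (0:ℝ) 1, ∀ t2 ∈ Icc (0:ℝ) 1,
      q1 t1 t2 ∈ Icc (0:ℝ) 1 ∧ q2 t1 t2 ∈ Icc (0:ℝ) 1)
    -- dominant-strategy incentive compatibility for bidder 1
    (hDIC : ∀ t1 ∈ Icc (0:ℝ) 1, ∀ t1' ∈ Icc (0:ℝ) 1, ∀ t2 ∈ Icc (0:ℝ) 1,
      q1 t1' t2 * t1 + q2 t1' t2 * (1 - t1) - pay t1' t2 ≤ u t1 t2)
    -- ex post individual rationality for bidder 1
    (hIR : ∀ t1 ∈ Icc (0:ℝ) 1, ∀ t2 ∈ Icc (0:ℝ) 1, 0 ≤ u t1 t2)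
    -- the type 1/2 has zero ex post utility against every opponent type
    (hzero : ∀ t2 ∈ Icc (0:ℝ) 1, u (1 / 2) t2 = 0)
    -- against t₂ = 0, bidder 1 gets both items for every t₁ ∈ (0,1]
    (halloc : ∀ t1 ∈ Ioc (0:ℝ) 1, q1 t1 0 = 1 ∧ q2 t1 0 = 0) :
    False := by
  have hmem : (1/4 : ℝ) ∈ Icc (0:ℝ) 1 := by norm_num
  have hmem2 : (1/2 : ℝ) ∈ Icc (0:ℝ) 1 := by norm_num
  have h0 : (0:ℝ) ∈ Icc (0:ℝ) 1 := by norm_num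
  obtain ⟨ha1, ha2⟩ := halloc (1/4) (by norm_num)
  have hD := hDIC (1/2) hmem2 (1/4) hmem 0 h0
  rw [ha1, ha2, hzero 0 h0] at hD
  have hIRv := hIR (1/4) hmem 0 h0
  rw [hu (1/4) 0, ha1, ha2] at hIRv
  linarith
end

section
/- For n i.i.d. bidders with density f on [0,b] and any nonnegative interim allocation q satisfying ∫_{[t,b]} q(s) f(s) ds ≤ (1 − F(t)ⁿ)/n for all t, and any weakly increasing, piecewise differentiable function φ : [0,b] → ℝ with φ(0) ≥ 0, one has ∫₀^b q(t) f(t) φ(t) dt ≤ ∫₀^b ((1 − F(t)ⁿ)/n) φ'(t) dt + φ(0)·(1 − F(0)ⁿ)/n. -/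
open Set MeasureTheory

/-!
Writing `φ t = φ 0 + ∫₀ᵗ φ'` and exchanging the order of integration over the triangle
`{0 ≤ s ≤ t ≤ b}` turns `∫ q f φ` into `φ 0 ∫ q f + ∫ φ'(s) (∫_{[s,b]} q f) ds`. Both tail
integrals are then bounded by the Border bound, the second one pointwise in `s` since `φ' ≥ 0`.
-/

section Triangle

variable {μ ν : Measure ℝ} {g h : ℝ → ℝ} {a b : ℝ}

noncomputable def triangleKernel (g h : ℝ → ℝ) : ℝ × ℝ → ℝ :=
  {p : ℝ × ℝ | p.2 ≤ p.1}.indicator fun p => g p.1 * h p.2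

lemma integrable_triangleKernel [SFinite ν] (hg : IntegrableOn g (Icc a b) μ)
    (hh : IntegrableOn h (Icc a b) ν) :
    Integrable (triangleKernel g h) ((μ.restrict (Icc a b)).prod (ν.restrict (Icc a b))) :=
  (hg.mul_prod hh).indicator (measurableSet_le measurable_snd measurable_fst)

lemma setIntegral_triangleKernel_snd {t : ℝ} (ht : t ∈ Icc a b) :
    ∫ s in Icc a b, triangleKernel g h (t, s) ∂ν = g t * ∫ s in Icc a t, h s ∂ν := by
  have hslice : (fun s => triangleKernel g h (t, s)) = (Iic t).indicator fun s => g t * h s := by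
    ext s; by_cases hs : s ≤ t <;> simp [triangleKernel, indicator, hs]
  have hinter : Icc a b ∩ Iic t = Icc a t := by
    ext s; simp only [mem_inter_iff, mem_Icc, mem_Iic]
    exact ⟨fun ⟨⟨has, _⟩, hst⟩ => ⟨has, hst⟩, fun ⟨has, hst⟩ => ⟨⟨has, hst.trans ht.2⟩, hst⟩⟩
  rw [hslice, setIntegral_indicator measurableSet_Iic, hinter, integral_const_mul]

lemma setIntegral_triangleKernel_fst {s : ℝ} (hs : s ∈ Icc a b) :
    ∫ t in Icc a b, triangleKernel g h (t, s) ∂μ = h s * ∫ t in Icc s b, g t ∂μ := by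
  have hslice : (fun t => triangleKernel g h (t, s)) = (Ici s).indicator fun t => h s * g t := by
    ext t; by_cases hst : s ≤ t <;> simp [triangleKernel, indicator, hst, mul_comm]
  have hinter : Icc a b ∩ Ici s = Icc s b := by
    ext t; simp only [mem_inter_iff, mem_Icc, mem_Ici]
    exact ⟨fun ⟨⟨_, htb⟩, hst⟩ => ⟨hst, htb⟩, fun ⟨hst, htb⟩ => ⟨⟨hs.1.trans hst, htb⟩, hst⟩⟩
  rw [hslice, setIntegral_indicator measurableSet_Ici, hinter, integral_const_mul]

lemma integrableOn_mul_setIntegral_Icc_tail [SFinite μ] [SFinite ν] (hg : IntegrableOn g (Icc a b) μ)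
    (hh : IntegrableOn h (Icc a b) ν) :
    IntegrableOn (fun s => h s * ∫ t in Icc s b, g t ∂μ) (Icc a b) ν :=
  IntegrableOn.congr_fun (integrable_triangleKernel hg hh).integral_prod_right
    (fun _ hs => setIntegral_triangleKernel_fst hs) measurableSet_Icc

lemma setIntegral_mul_setIntegral_Icc_swap [SFinite μ] [SFinite ν] (hg : IntegrableOn g (Icc a b) μ)
    (hh : IntegrableOn h (Icc a b) ν) :
    ∫ t in Icc a b, g t * ∫ s in Icc a t, h s ∂ν ∂μ =
      ∫ s in Icc a b, h s * ∫ t in Icc s b, g t ∂μ ∂ν := by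
  calc ∫ t in Icc a b, g t * ∫ s in Icc a t, h s ∂ν ∂μ
      = ∫ t in Icc a b, ∫ s in Icc a b, triangleKernel g h (t, s) ∂ν ∂μ :=
        setIntegral_congr_fun measurableSet_Icc fun _ ht => (setIntegral_triangleKernel_snd ht).symm
    _ = ∫ s in Icc a b, ∫ t in Icc a b, triangleKernel g h (t, s) ∂μ ∂ν :=
        integral_integral_swap (integrable_triangleKernel hg hh)
    _ = ∫ s in Icc a b, h s * ∫ t in Icc s b, g t ∂μ ∂ν :=
        setIntegral_congr_fun measurableSet_Icc fun _ hs => setIntegral_triangleKernel_fst hs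

end Triangle

section Deriv

variable {φ φ' : ℝ → ℝ} {a b : ℝ}

lemma integrableOn_Icc_deriv_of_nonneg
    (hφ : ∀ t ∈ Icc a b, HasDerivWithinAt φ (φ' t) (Icc a b) t)
    (hφ' : ∀ t ∈ Ioo a b, 0 ≤ φ' t) : IntegrableOn φ' (Icc a b) :=
  (integrableOn_Icc_iff_integrableOn_Ioc).2 <| intervalIntegral.integrableOn_deriv_of_nonneg
    (fun t ht => (hφ t ht).continuousWithinAt)
    (fun t ht => (hφ t (Ioo_subset_Icc_self ht)).hasDerivAt (Icc_mem_nhds ht.1 ht.2)) hφ'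

lemma eq_add_setIntegral_Icc_deriv
    (hφ : ∀ t ∈ Icc a b, HasDerivWithinAt φ (φ' t) (Icc a b) t)
    (hφ' : IntegrableOn φ' (Icc a b)) {t : ℝ} (ht : t ∈ Icc a b) :
    φ t = φ a + ∫ s in Icc a t, φ' s := by
  have hsub : Icc a t ⊆ Icc a b := Icc_subset_Icc le_rfl ht.2
  have hftc := intervalIntegral.integral_eq_sub_of_hasDeriv_right_of_le ht.1
    (fun x hx => (hφ x (hsub hx)).continuousWithinAt.mono hsub)
    (fun x hx => ((hφ x (hsub (Ioo_subset_Icc_self hx))).hasDerivAt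
      (Icc_mem_nhds hx.1 (hx.2.trans_le ht.2))).hasDerivWithinAt)
    ((intervalIntegrable_iff_integrableOn_Icc_of_le ht.1).2 (hφ'.mono_set hsub))
  rw [intervalIntegral.integral_of_le ht.1] at hftc
  rw [integral_Icc_eq_integral_Ioc, hftc]
  ring

theorem setIntegral_mul_eq_add_setIntegral_deriv_mul_tail {g : ℝ → ℝ}
    (hg : IntegrableOn g (Icc a b))
    (hφ : ∀ t ∈ Icc a b, HasDerivWithinAt φ (φ' t) (Icc a b) t)
    (hφ' : IntegrableOn φ' (Icc a b)) :
    ∫ t in Icc a b, g t * φ t =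
      φ a * (∫ t in Icc a b, g t) + ∫ s in Icc a b, φ' s * ∫ t in Icc s b, g t := by
  have hexpand : ∀ t ∈ Icc a b, g t * φ t = g t * φ a + g t * ∫ s in Icc a t, φ' s :=
    fun t ht => by rw [eq_add_setIntegral_Icc_deriv hφ hφ' ht, mul_add]
  have hrest : IntegrableOn (fun t => g t * ∫ s in Icc a t, φ' s) (Icc a b) :=
    ((hg.mul_continuousOn (fun t ht => (hφ t ht).continuousWithinAt) isCompact_Icc).sub
      (hg.mul_const (φ a))).congr_fun
      (fun t ht => by rw [Pi.sub_apply, hexpand t ht]; ring) measurableSet_Icc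
  rw [setIntegral_congr_fun measurableSet_Icc hexpand, integral_add (hg.mul_const _) hrest,
    integral_mul_const, mul_comm, setIntegral_mul_setIntegral_Icc_swap hg hφ']

end Deriv

theorem border_tail_integration_by_parts_general
    (n : ℕ) (b : ℝ) (hb : 0 < b)
    (f F q φ φ' : ℝ → ℝ)
    (hf_int : IntegrableOn f (Icc 0 b))
    (hF : ∀ t ∈ Icc (0:ℝ) b, F t = ∫ s in Icc (0:ℝ) t, f s)
    (hqf_int : IntegrableOn (fun t => q t * f t) (Icc 0 b))
    (htail : ∀ t ∈ Icc (0:ℝ) b, (∫ s in Icc t b, q s * f s) ≤ (1 - F t ^ n) / n)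
    (hφ_deriv : ∀ t ∈ Icc (0:ℝ) b, HasDerivWithinAt φ (φ' t) (Icc 0 b) t)
    (hφ'_nonneg : ∀ t ∈ Icc (0:ℝ) b, 0 ≤ φ' t)
    (hφ0 : 0 ≤ φ 0) :
    (∫ t in Icc (0:ℝ) b, q t * f t * φ t) ≤
      (∫ t in Icc (0:ℝ) b, (1 - F t ^ n) / n * φ' t) + φ 0 * (1 - F 0 ^ n) / n := by
  have hφ'_int : IntegrableOn φ' (Icc 0 b) :=
    integrableOn_Icc_deriv_of_nonneg hφ_deriv fun t ht => hφ'_nonneg t (Ioo_subset_Icc_self ht)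
  have hF_cont : ContinuousOn F (Icc 0 b) :=
    (intervalIntegral.continuousOn_primitive_Icc hf_int).congr hF
  have hbound_int : IntegrableOn (fun t => (1 - F t ^ n) / n * φ' t) (Icc 0 b) :=
    hφ'_int.continuousOn_mul ((continuousOn_const.sub (hF_cont.pow n)).div_const _) isCompact_Icc
  have hbase : φ 0 * ∫ t in Icc 0 b, q t * f t ≤ φ 0 * (1 - F 0 ^ n) / n := by
    rw [mul_div_assoc]
    exact mul_le_mul_of_nonneg_left (htail 0 ⟨le_rfl, hb.le⟩) hφ0
  have hlayers : ∫ s in Icc 0 b, φ' s * ∫ t in Icc s b, q t * f t ≤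
      ∫ t in Icc 0 b, (1 - F t ^ n) / n * φ' t :=
    setIntegral_mono_on (integrableOn_mul_setIntegral_Icc_tail hqf_int hφ'_int) hbound_int
      measurableSet_Icc fun s hs => by
        rw [mul_comm _ (φ' s)]
        exact mul_le_mul_of_nonneg_left (htail s hs) (hφ'_nonneg s hs)
  rw [setIntegral_mul_eq_add_setIntegral_deriv_mul_tail hqf_int hφ_deriv hφ'_int]
  linarith

/-- Integration by parts on the Border upper-tail bound: if the interim allocation `q`
satisfies `∫_{[t,b]} q f ≤ (1 − F(t)ⁿ)/n` for all `t` and `φ` is weakly increasing and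
differentiable with `φ(0) ≥ 0`, then
`∫₀^b q f φ ≤ ∫₀^b ((1 − Fⁿ)/n) φ' + φ(0)(1 − F(0)ⁿ)/n`. -/
theorem border_tail_integration_by_parts
    (n : ℕ) (hn : 1 ≤ n) (b : ℝ) (hb : 0 < b)
    (f F q φ φ' : ℝ → ℝ)
    (hf_nonneg : ∀ t ∈ Icc (0:ℝ) b, 0 ≤ f t)
    (hf_int : IntegrableOn f (Icc 0 b))
    (hF : ∀ t ∈ Icc (0:ℝ) b, F t = ∫ s in Icc (0:ℝ) t, f s)
    (hFb : F b = 1)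
    (hq_nonneg : ∀ t ∈ Icc (0:ℝ) b, 0 ≤ q t)
    (hqf_int : IntegrableOn (fun t => q t * f t) (Icc 0 b))
    (htail : ∀ t ∈ Icc (0:ℝ) b, (∫ s in Icc t b, q s * f s) ≤ (1 - F t ^ n) / n)
    (hφ_mono : MonotoneOn φ (Icc 0 b))
    (hφ_deriv : ∀ t ∈ Icc (0:ℝ) b, HasDerivWithinAt φ (φ' t) (Icc 0 b) t)
    (hφ'_nonneg : ∀ t ∈ Icc (0:ℝ) b, 0 ≤ φ' t)
    (hφ0 : 0 ≤ φ 0) :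
    (∫ t in Icc (0:ℝ) b, q t * f t * φ t) ≤
      (∫ t in Icc (0:ℝ) b, (1 - F t ^ n) / n * φ' t) + φ 0 * (1 - F 0 ^ n) / n :=
  border_tail_integration_by_parts_general n b hb f F q φ φ' hf_int hF hqf_int htail hφ_deriv
    hφ'_nonneg hφ0
end

section
/- For n ≥ 1 and 0 ≤ l₁ < l₂ ≤ 1, the pooled interim allocation q̄ = (l₂ⁿ − l₁ⁿ)/(n(l₂ − l₁)) satisfies Border feasibility on the pooled interval: for every l ∈ [l₁, l₂], q̄·(l₂ − l) ≤ (1 − lⁿ)/n − (1 − l₂ⁿ)/n · 1, i.e., ∫_l^{l₂} q̄ ds + ∫_{l₂}^1 s^{n−1} ds ≤ (1 − lⁿ)/n. -/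
/-! The tail `∫_{l₂}^1 s^(n-1)` equals `(1 - l₂ⁿ)/n`, so the constraint reduces to
`(l₂ - l) · q̄ ≤ (l₂ⁿ - lⁿ)/n`. Up to the factor `1/n`, `q̄` is the slope of the chord of
`s ↦ sⁿ` over `[l₁, l₂]`; by convexity it is at most the slope of the chord over `[l, l₂]`. -/

open intervalIntegral

theorem ConvexOn.sub_mul_secant_le {𝕜 : Type*} [Field 𝕜] [LinearOrder 𝕜] [IsStrictOrderedRing 𝕜]
    {s : Set 𝕜} {f : 𝕜 → 𝕜} (hf : ConvexOn 𝕜 s f) {x y z : 𝕜} (hx : x ∈ s) (hy : y ∈ s)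
    (hz : z ∈ s) (hxy : x ≤ y) (hyz : y ≤ z) :
    (z - y) * ((f z - f x) / (z - x)) ≤ f z - f y := by
  rcases hyz.eq_or_lt with rfl | hyz
  · simp
  have hslope : (f z - f x) / (z - x) ≤ (f z - f y) / (z - y) := by
    simpa only [← neg_div_neg_eq (f _ - f z), neg_sub] using
      hf.secant_mono hz hx hy (hxy.trans_lt hyz).ne hyz.ne hxy
  calc (z - y) * ((f z - f x) / (z - x))
      ≤ (z - y) * ((f z - f y) / (z - y)) := by gcongr
    _ = f z - f y := mul_div_cancel₀ _ (sub_ne_zero.2 hyz.ne')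

theorem integral_pow_pred {n : ℕ} (hn : 1 ≤ n) (a b : ℝ) :
    ∫ x in a..b, x ^ (n - 1) = (b ^ n - a ^ n) / n := by
  rw [integral_pow, Nat.sub_add_cancel hn, ← Nat.cast_add_one, Nat.sub_add_cancel hn]

theorem pooled_allocation_border_feasible_general
    (n : ℕ) (hn : 1 ≤ n) (l1 l2 l : ℝ)
    (h1 : 0 ≤ l1)
    (hl : l ∈ Set.Icc l1 l2) :
    (∫ _s in l..l2, (l2 ^ n - l1 ^ n) / (n * (l2 - l1))) +
      (∫ s in l2..(1:ℝ), s ^ (n - 1)) ≤ (1 - l ^ n) / n := by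
  obtain ⟨hl1, hl2⟩ := hl
  have hchord : (l2 - l) * ((l2 ^ n - l1 ^ n) / (l2 - l1)) ≤ l2 ^ n - l ^ n :=
    (convexOn_pow n).sub_mul_secant_le h1 (h1.trans hl1) (h1.trans (hl1.trans hl2)) hl1 hl2
  rw [integral_const, integral_pow_pred hn, one_pow, smul_eq_mul, div_mul_eq_div_div_swap,
    mul_div_assoc', ← add_div]
  gcongr
  linarith

/-- Border feasibility of the pooled interim allocation: for `l ∈ [l₁, l₂]`, the
constant allocation `q̄ = (l₂ⁿ − l₁ⁿ)/(n(l₂ − l₁))` on the pooled interval together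
with `s^(n−1)` above `l₂` satisfies the Border tail constraint
`∫_l^{l₂} q̄ + ∫_{l₂}^1 s^(n−1) ≤ (1 − lⁿ)/n`. -/
theorem pooled_allocation_border_feasible
    (n : ℕ) (hn : 1 ≤ n) (l1 l2 l : ℝ)
    (h1 : 0 ≤ l1) (h12 : l1 < l2) (h2 : l2 ≤ 1)
    (hl : l ∈ Set.Icc l1 l2) :
    (∫ _s in l..l2, (l2 ^ n - l1 ^ n) / (n * (l2 - l1))) +
      (∫ s in l2..(1:ℝ), s ^ (n - 1)) ≤ (1 - l ^ n) / n :=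
  pooled_allocation_border_feasible_general n hn l1 l2 l h1 hl
end

section
/- In the two-bidder uniform example, the mechanism with allocation as in the optimal BIC construction and payment pay₁(t₁,t₂) = (1 − β(t₁))·(q¹₁(t₁,t₂)·t₁ + q²₁(t₁,t₂)·(1 − t₁)), where β(t) = (3/16 − t + t²)/(t² + (1−t)²) for t ∈ [0,1/4] ∪ [3/4,1] and β(t) = 0 for t ∈ (1/4,3/4), is ex post individually rational: u₁(t₁,t₂) = β(t₁)·(q¹₁ t₁ + q²₁ (1−t₁)) ≥ 0 for all (t₁,t₂); moreover β(t) ∈ [0,1] for all t ∈ [0,1]. -/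
open Set

/-- Ex post IR of the optimal BIC mechanism in the two-bidder uniform example: with
the stated allocation, `β(t) = (3/16 − t + t²)/(t² + (1−t)²)` outside `(1/4,3/4)` and
`0` inside, and payment `pay₁ = (1 − β(t₁))·(q¹₁ t₁ + q²₁ (1−t₁))`, the ex post utility
equals `β(t₁)·(q¹₁ t₁ + q²₁ (1−t₁)) ≥ 0`; moreover `β(t) ∈ [0,1]` on `[0,1]`. -/
theorem uniform_example_expost_IR
    (q1 q2 pay : ℝ → ℝ → ℝ) (B : ℝ → ℝ)
    (hq1 : ∀ t1 t2 : ℝ, q1 t1 t2 =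
      if t1 = t2 ∨ (t1 ∈ Ioo (1/4 : ℝ) (3/4) ∧ t2 ∈ Ioo (1/4 : ℝ) (3/4)) then 1/2
      else if t2 < t1 then 1 else 0)
    (hq2 : ∀ t1 t2 : ℝ, q2 t1 t2 = 1 - q1 t1 t2)
    (hB : ∀ t : ℝ, B t =
      if t ∈ Ioo (1/4 : ℝ) (3/4) then 0
      else (3/16 - t + t ^ 2) / (t ^ 2 + (1 - t) ^ 2))
    (hpay : ∀ t1 t2 : ℝ, pay t1 t2 =
      (1 - B t1) * (q1 t1 t2 * t1 + q2 t1 t2 * (1 - t1))) :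
    (∀ t ∈ Icc (0:ℝ) 1, B t ∈ Icc (0:ℝ) 1) ∧
    (∀ t1 ∈ Icc (0:ℝ) 1, ∀ t2 ∈ Icc (0:ℝ) 1,
      q1 t1 t2 * t1 + q2 t1 t2 * (1 - t1) - pay t1 t2 =
        B t1 * (q1 t1 t2 * t1 + q2 t1 t2 * (1 - t1)) ∧
      0 ≤ q1 t1 t2 * t1 + q2 t1 t2 * (1 - t1) - pay t1 t2) := by
  have hBrange : ∀ t ∈ Icc (0:ℝ) 1, B t ∈ Icc (0:ℝ) 1 := by
    intro t ht
    rw [hB]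
    rw [mem_Icc]
    by_cases h : t ∈ Ioo (1/4 : ℝ) (3/4)
    · rw [if_pos h]; exact ⟨le_refl 0, zero_le_one⟩
    · rw [if_neg h]
      have hden : (0:ℝ) < t ^ 2 + (1 - t) ^ 2 := by nlinarith [sq_nonneg t, sq_nonneg (1-t), sq_nonneg (2*t-1)]
      have hnum : 0 ≤ 3/16 - t + t ^ 2 := by
        simp only [mem_Ioo, not_and_or, not_lt] at h
        rcases h with h | h
        · nlinarith
        · nlinarith
      constructor
      · positivity
      · rw [div_le_one hden]; nlinarith [sq_nonneg (t - 1/2)]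
  refine ⟨hBrange, fun t1 ht1 t2 ht2 => ?_⟩
  have hv : 0 ≤ q1 t1 t2 * t1 + q2 t1 t2 * (1 - t1) := by
    have hq : q1 t1 t2 ∈ Icc (0:ℝ) 1 := by
      rw [hq1]
      split_ifs <;> norm_num
    rw [hq2]
    obtain ⟨h0, h1⟩ := hq
    obtain ⟨ha, hb⟩ := ht1
    nlinarith
  have heq : q1 t1 t2 * t1 + q2 t1 t2 * (1 - t1) - pay t1 t2 =
      B t1 * (q1 t1 t2 * t1 + q2 t1 t2 * (1 - t1)) := by
    rw [hpay]; ring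
  refine ⟨heq, ?_⟩
  rw [heq]
  exact mul_nonneg (hBrange t1 ht1).1 hv
end
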